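/- arXiv:1404.6960 — 4 statements merged into one kernel-verified Lean document; each statement's English description precedes it below -/
import Mathlib

section
/- Suppose p⁻¹ < q₁ < q₂ < ... < q_d ≤ 1 and let N(z) = max_i(qᵢ|zᵢ|_p). Then for each j = 0,...,d, the set B_j = ℤ_p^j × (pℤ_p)^{d-j} equals the closed N-ball of radius q_j centered at 0 (with the convention that B_0 = pℤ_p^d is the ball of radius q_d/p). In particular, pℤ_p^d = B_0 ⊂ B_1 ⊂ ... ⊂ B_d = ℤ_p^d is a chain of d+1 distinct N-balls. -/
/-- The norm `N_{q₁,…,q_d}(z) = max_i qᵢ |zᵢ|_p` on `ℚ_p^d`. -/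
noncomputable def padicN (p : ℕ) [Fact p.Prime] {d : ℕ} (q : Fin d → ℝ)
    (z : Fin d → ℚ_[p]) : ℝ :=
  ⨆ i, q i * ‖z i‖

/-- `ballB p j` is `ℤ_p^j × (pℤ_p)^{d-j}`: vectors whose first `j` coordinates are
p-adic integers and remaining coordinates lie in `pℤ_p`. -/
def ballB (p : ℕ) [Fact p.Prime] (d : ℕ) (j : ℕ) : Set (Fin d → ℚ_[p]) :=
  {z | ∀ i : Fin d, if (i : ℕ) < j then ‖z i‖ ≤ 1 else ‖z i‖ ≤ (p : ℝ)⁻¹}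

/-!
Coordinatewise, `‖zᵢ‖_p ≤ 1` and `‖zᵢ‖_p ≤ p⁻¹` are the only two conditions in question, and
since `‖zᵢ‖_p` takes values in `p^ℤ`, a bound `qᵢ ‖zᵢ‖_p ≤ r` is equivalent to one of them as
soon as `r` lies in the right gap: `‖zᵢ‖_p ≤ 1 ↔ qᵢ ‖zᵢ‖_p ≤ q_j` for `i ≤ j` (as
`p⁻¹ < qᵢ ≤ q_j ≤ 1`), and `‖zᵢ‖_p ≤ p⁻¹ ↔ qᵢ ‖zᵢ‖_p ≤ r` whenever `qᵢ / p ≤ r < qᵢ`, which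
holds for `r = q_j` with `j < i` and for `r = q_d / p`. The chain is strict because the
`j`-th unit vector lies in `B_{j+1}` but not in `B_j`.
-/

namespace Padic

variable {p : ℕ} [Fact p.Prime]

theorem norm_le_inv_iff_norm_lt_one (x : ℚ_[p]) : ‖x‖ ≤ (p : ℝ)⁻¹ ↔ ‖x‖ < 1 := by
  simpa using norm_le_pow_iff_norm_lt_pow_add_one x (-1)

theorem norm_le_one_iff_norm_lt (x : ℚ_[p]) : ‖x‖ ≤ 1 ↔ ‖x‖ < p := by
  simpa using norm_le_pow_iff_norm_lt_pow_add_one x 0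

theorem norm_le_one_iff_mul_norm_le {c r : ℝ} (hc : (p : ℝ)⁻¹ < c) (hcr : c ≤ r) (hr : r ≤ 1)
    (x : ℚ_[p]) : ‖x‖ ≤ 1 ↔ c * ‖x‖ ≤ r := by
  have hp : (0 : ℝ) < p := by exact_mod_cast (Fact.out : p.Prime).pos
  have hc₀ : 0 < c := (inv_pos.mpr hp).trans hc
  constructor
  · intro hx
    exact (mul_le_of_le_one_right hc₀.le hx).trans hcr
  · intro hx
    by_contra hx₁
    rw [norm_le_one_iff_norm_lt, not_lt] at hx₁
    have : 1 < c * ‖x‖ :=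
      calc (1 : ℝ) = (p : ℝ)⁻¹ * p := (inv_mul_cancel₀ hp.ne').symm
        _ < c * p := mul_lt_mul_of_pos_right hc hp
        _ ≤ c * ‖x‖ := mul_le_mul_of_nonneg_left hx₁ hc₀.le
    linarith

theorem norm_le_inv_iff_mul_norm_le {c r : ℝ} (hc : 0 ≤ c) (hcr : c * (p : ℝ)⁻¹ ≤ r)
    (hrc : r < c) (x : ℚ_[p]) : ‖x‖ ≤ (p : ℝ)⁻¹ ↔ c * ‖x‖ ≤ r := by
  constructor
  · intro hx
    exact (mul_le_mul_of_nonneg_left hx hc).trans hcr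
  · intro hx
    rw [norm_le_inv_iff_norm_lt_one]
    by_contra hx₁
    rw [not_lt] at hx₁
    linarith [le_mul_of_one_le_right hc hx₁]

end Padic

section Balls

variable {p : ℕ} [Fact p.Prime] {d : ℕ}

theorem padicN_le_iff {q : Fin d → ℝ} {r : ℝ} (hr : 0 ≤ r) (z : Fin d → ℚ_[p]) :
    padicN p q z ≤ r ↔ ∀ i, q i * ‖z i‖ ≤ r :=
  ⟨fun h i ↦ (le_ciSup (Set.finite_range _).bddAbove i).trans h, fun h ↦ Real.iSup_le h hr⟩

theorem ballB_eq_setOf_padicN_le {q : Fin d → ℝ} {j : ℕ} {r : ℝ} (hr : 0 ≤ r)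
    (h_lt : ∀ i : Fin d, (i : ℕ) < j → (p : ℝ)⁻¹ < q i ∧ q i ≤ r ∧ r ≤ 1)
    (h_ge : ∀ i : Fin d, j ≤ (i : ℕ) → q i * (p : ℝ)⁻¹ ≤ r ∧ r < q i) :
    ballB p d j = {z | padicN p q z ≤ r} := by
  ext z
  simp only [ballB, Set.mem_ofPred_eq, padicN_le_iff hr]
  refine forall_congr' fun i ↦ ?_
  split_ifs with hi
  · obtain ⟨hpq, hqr, hr₁⟩ := h_lt i hi
    exact Padic.norm_le_one_iff_mul_norm_le hpq hqr hr₁ _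
  · obtain ⟨hqr, hrq⟩ := h_ge i (not_lt.mp hi)
    exact Padic.norm_le_inv_iff_mul_norm_le (hr.trans hrq.le) hqr hrq _

theorem ballB_mono : Monotone (ballB p d) := by
  intro j k hjk z hz i
  have hp : (p : ℝ)⁻¹ ≤ 1 := inv_le_one_of_one_le₀ (by exact_mod_cast (Fact.out : p.Prime).one_le)
  have hzi := hz i
  split_ifs at hzi ⊢ <;> first | exact hzi | exact hzi.trans hp | omega

theorem ballB_ssubset_succ {j : ℕ} (hj : j < d) : ballB p d j ⊂ ballB p d (j + 1) := by
  refine (ballB_mono (Nat.le_succ j)).ssubset_of_not_subset fun hsub ↦ ?_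
  have hunit : Pi.single ⟨j, hj⟩ 1 ∈ ballB p d (j + 1) := by
    intro i
    rcases eq_or_ne i ⟨j, hj⟩ with rfl | hi
    · simp
    · simp [Pi.single_eq_of_ne hi]
  have hj_coord := hsub hunit ⟨j, hj⟩
  have hp : (p : ℝ)⁻¹ < 1 := inv_lt_one_of_one_lt₀ (by exact_mod_cast (Fact.out : p.Prime).one_lt)
  simp only [lt_irrefl, if_false, Pi.single_eq_same, norm_one] at hj_coord
  linarith

end Balls

theorem ballB_chain (p : ℕ) [Fact p.Prime] (d : ℕ) (hd : 0 < d) (q : Fin d → ℝ)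
    (hq₁ : ∀ i, (p : ℝ)⁻¹ < q i) (hq₂ : ∀ i, q i ≤ 1) (hmono : StrictMono q) :
    (∀ j : Fin d, ballB p d ((j : ℕ) + 1) = {z | padicN p q z ≤ q j}) ∧
    (ballB p d 0 = {z | padicN p q z ≤ q ⟨d - 1, Nat.sub_lt hd one_pos⟩ / p}) ∧
    (∀ j : ℕ, j < d → ballB p d j ⊂ ballB p d (j + 1)) := by
  have hp : (0 : ℝ) < (p : ℝ)⁻¹ := inv_pos.mpr (by exact_mod_cast (Fact.out : p.Prime).pos)
  have hq_pos : ∀ i, 0 < q i := fun i ↦ hp.trans (hq₁ i)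
  refine ⟨fun j ↦ ?_, ?_, fun j ↦ ballB_ssubset_succ⟩
  · refine ballB_eq_setOf_padicN_le (hq_pos j).le
      (fun i hi ↦ ⟨hq₁ i, hmono.monotone (Fin.le_def.mpr (by omega)), hq₂ j⟩)
      (fun i hi ↦ ⟨?_, hmono (Fin.lt_def.mpr (by omega))⟩)
    exact (mul_le_of_le_one_left hp.le (hq₂ i)).trans (hq₁ j).le
  · rw [div_eq_mul_inv]
    refine ballB_eq_setOf_padicN_le (mul_nonneg (hq_pos _).le hp.le)
      (fun i hi ↦ absurd hi (Nat.not_lt_zero _)) (fun i _ ↦ ⟨?_, ?_⟩)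
    · exact mul_le_mul_of_nonneg_right
        (hmono.monotone (Fin.le_def.mpr (Nat.le_sub_one_of_lt i.isLt))) hp.le
    · exact (mul_le_of_le_one_left hp.le (hq₂ _)).trans_lt (hq₁ i)
end

section
/- With notation as in Lemma 1 (maximal chain pL = L₀ ⊂ ... ⊂ L_d = L of lattices and f_j ∈ L_j \ L_{j-1}), each lattice L_j has the form L_j = ℤ_p f₁ ⊕ ... ⊕ ℤ_p f_j ⊕ pℤ_p f_{j+1} ⊕ ... ⊕ pℤ_p f_d. -/
/-- A lattice in `ℚ_p^d`: the `ℤ_p`-span of a `ℚ_p`-basis (equivalently, an open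
compact `ℤ_p`-submodule, i.e. a free `ℤ_p`-submodule of rank `d`). -/
def IsLattice (p : ℕ) [Fact p.Prime] {d : ℕ}
    (L : Submodule ℤ_[p] (Fin d → ℚ_[p])) : Prop :=
  ∃ e : Module.Basis (Fin d) ℚ_[p] (Fin d → ℚ_[p]),
    L = Submodule.span ℤ_[p] (Set.range (⇑e))

/-- The scaled lattice `pL`. -/
noncomputable def pScale (p : ℕ) [Fact p.Prime] {d : ℕ}
    (L : Submodule ℤ_[p] (Fin d → ℚ_[p])) : Submodule ℤ_[p] (Fin d → ℚ_[p]) :=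
  Submodule.map ((p : ℤ_[p]) • (LinearMap.id : (Fin d → ℚ_[p]) →ₗ[ℤ_[p]] (Fin d → ℚ_[p]))) L

/-!
Maximality of the chain forces `L_{j+1} = L_j + ℤ_p f_j`, since `L_j + ℤ_p f_j` is again a
lattice strictly above `L_j`; hence `L_j = pL + ℤ_p f_1 + ⋯ + ℤ_p f_j`. For `j = d` this reads
`L = pL + ℤ_p f_1 + ⋯ + ℤ_p f_d`, so `L = ℤ_p f_1 + ⋯ + ℤ_p f_d` by Nakayama, and then
`pL = pℤ_p f_1 + ⋯ + pℤ_p f_d`.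
-/

namespace Submodule

variable {R M : Type*} [CommSemiring R] [AddCommMonoid M] [Module R M]

theorem eq_sup_span_image_of_succ_eq_sup {n : ℕ} {L : Fin (n + 1) → Submodule R M}
    {f : Fin n → M} (h : ∀ j : Fin n, L j.succ = L j.castSucc ⊔ span R {f j}) (j : Fin (n + 1)) :
    L j = L 0 ⊔ span R (f '' {i | (i : ℕ) < j}) := by
  induction j using Fin.induction with
  | zero => simp
  | succ j ih =>
    have hset : {i : Fin n | (i : ℕ) < j.succ} = {i : Fin n | (i : ℕ) < j.castSucc} ∪ {j} := by
      ext i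
      simp [le_iff_eq_or_lt, Fin.ext_iff]
    rw [h, ih, hset, Set.image_union, Set.image_singleton, span_union, sup_assoc]

theorem span_range_sup_span_image_eq {ι : Type*} {v w : ι → M} (P : ι → Prop) [DecidablePred P]
    (hw : ∀ i, w i ∈ span R {v i}) :
    span R (Set.range w) ⊔ span R (v '' {i | P i}) =
      span R (Set.range fun i => if P i then v i else w i) := by
  rw [← span_union]
  apply le_antisymm
  · rw [span_le]
    rintro _ (⟨i, rfl⟩ | ⟨i, hi, rfl⟩)
    · by_cases hPi : P i
      · refine span_le.2 ?_ (hw i)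
        rintro _ rfl
        exact subset_span ⟨i, if_pos hPi⟩
      · exact subset_span ⟨i, if_neg hPi⟩
    · exact subset_span ⟨i, if_pos hi⟩
  · rw [span_le]
    rintro _ ⟨i, rfl⟩
    by_cases hPi : P i
    · simp only [if_pos hPi]
      exact subset_span (Or.inr ⟨i, hPi, rfl⟩)
    · simp only [if_neg hPi]
      exact subset_span (Or.inl ⟨i, rfl⟩)

end Submodule

section

variable {p : ℕ} [Fact p.Prime] {d : ℕ}

theorem isLattice_iff_submodule_isLattice {L : Submodule ℤ_[p] (Fin d → ℚ_[p])} :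
    IsLattice p L ↔ L.IsLattice ℚ_[p] := by
  constructor
  · rintro ⟨e, rfl⟩
    refine ⟨Submodule.fg_span (Set.finite_range _), top_le_iff.1 ?_⟩
    rw [← e.span_eq]
    exact Submodule.span_mono Submodule.subset_span
  · intro hL
    let b := Module.finBasisOfFinrankEq ℤ_[p] L
      ((Submodule.IsLattice.finrank_of_pi ℚ_[p] L).trans (Fintype.card_fin d))
    refine ⟨b.extendOfIsLattice ℚ_[p], ?_⟩
    have := congrArg (Submodule.map L.subtype) b.span_eq
    rw [Submodule.map_span, Submodule.map_top, Submodule.range_subtype, ← Set.range_comp] at this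
    refine this.symm.trans ?_
    congr 2
    ext k
    simp

theorem IsLattice.sup_span_singleton {L : Submodule ℤ_[p] (Fin d → ℚ_[p])} (hL : IsLattice p L)
    (x : Fin d → ℚ_[p]) : IsLattice p (L ⊔ Submodule.span ℤ_[p] {x}) := by
  rw [isLattice_iff_submodule_isLattice] at hL ⊢
  exact Submodule.IsLattice.of_le_of_isLattice_of_fg ℚ_[p] le_sup_left
    (hL.fg.sup (Submodule.fg_span_singleton x))

theorem IsLattice.sup_span_singleton_eq_of_forall_not_between
    {L L' : Submodule ℤ_[p] (Fin d → ℚ_[p])} (hL : IsLattice p L)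
    (hmax : ∀ M, IsLattice p M → L < M → M < L' → False) (hLL' : L ≤ L')
    {x : Fin d → ℚ_[p]} (hxL' : x ∈ L') (hxL : x ∉ L) :
    L ⊔ Submodule.span ℤ_[p] {x} = L' := by
  have hlt : L < L ⊔ Submodule.span ℤ_[p] {x} :=
    left_lt_sup.2 fun h => hxL (h (Submodule.mem_span_singleton_self x))
  have hle : L ⊔ Submodule.span ℤ_[p] {x} ≤ L' :=
    sup_le hLL' ((Submodule.span_singleton_le_iff_mem _ _).2 hxL')
  by_contra hne
  exact hmax _ (hL.sup_span_singleton x) hlt (lt_of_le_of_ne hle hne)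

theorem le_of_le_pScale_sup {L N : Submodule ℤ_[p] (Fin d → ℚ_[p])} (hL : L.FG)
    (h : L ≤ pScale p L ⊔ N) : L ≤ N := by
  refine Submodule.le_of_le_smul_of_le_jacobson_bot (I := IsLocalRing.maximalIdeal ℤ_[p]) hL
    (IsLocalRing.jacobson_eq_maximalIdeal ⊥ bot_ne_top).ge (h.trans ?_)
  rw [sup_comm]
  refine sup_le_sup_left ?_ N
  rw [PadicInt.maximalIdeal_eq_span_p, Submodule.ideal_span_singleton_smul]
  rintro _ ⟨x, hx, rfl⟩
  exact Submodule.smul_mem_pointwise_smul x (p : ℤ_[p]) L hx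

theorem pScale_span_range {ι : Type*} (v : ι → Fin d → ℚ_[p]) :
    pScale p (Submodule.span ℤ_[p] (Set.range v)) =
      Submodule.span ℤ_[p] (Set.range fun i => (p : ℚ_[p]) • v i) := by
  simp only [pScale, Submodule.map_span, ← Set.range_comp, Function.comp_def,
    LinearMap.smul_apply, LinearMap.id_apply, Nat.cast_smul_eq_nsmul]

end

theorem lemma1_lattice_form (p : ℕ) [Fact p.Prime] (d : ℕ)
    (L : Fin (d + 1) → Submodule ℤ_[p] (Fin d → ℚ_[p]))
    (hlat : ∀ j, IsLattice p (L j))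
    (hmono : StrictMono L)
    (h0 : L 0 = pScale p (L (Fin.last d)))
    (hmax : ∀ j : Fin d, ∀ M : Submodule ℤ_[p] (Fin d → ℚ_[p]),
      IsLattice p M → L j.castSucc < M → M < L j.succ → False)
    (f : Fin d → (Fin d → ℚ_[p]))
    (hf : ∀ j : Fin d, f j ∈ L j.succ ∧ f j ∉ L j.castSucc) :
    ∀ j : Fin (d + 1), L j = Submodule.span ℤ_[p]
      (Set.range fun i : Fin d =>
        if (i : ℕ) < (j : ℕ) then f i else (p : ℚ_[p]) • f i) := by
  have hstep : ∀ j : Fin d, L j.succ = L j.castSucc ⊔ Submodule.span ℤ_[p] {f j} := fun j =>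
    ((hlat _).sup_span_singleton_eq_of_forall_not_between (hmax j)
      (hmono Fin.castSucc_lt_succ).le (hf j).1 (hf j).2).symm
  have hchain := Submodule.eq_sup_span_image_of_succ_eq_sup hstep
  have hlast : L (Fin.last d) = Submodule.span ℤ_[p] (Set.range f) := by
    refine le_antisymm (le_of_le_pScale_sup (isLattice_iff_submodule_isLattice.1 (hlat _)).fg ?_) ?_
    · rw [← h0, hchain]
      exact sup_le_sup_left (Submodule.span_mono (Set.image_subset_range _ _)) _
    · rw [Submodule.span_le, Set.range_subset_iff]
      exact fun i => hmono.monotone (Fin.le_last _) (hf i).1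
  have hL0 : L 0 = Submodule.span ℤ_[p] (Set.range fun i => (p : ℚ_[p]) • f i) := by
    rw [h0, hlast, pScale_span_range]
  intro j
  rw [hchain j, hL0]
  refine Submodule.span_range_sup_span_image_eq _ fun i => ?_
  exact Submodule.mem_span_singleton.2 ⟨p, by simp only [Nat.cast_smul_eq_nsmul]⟩
end

section
/- The function N of Lemma 2 is a norm on ℚ_p^d: it is nondegenerate, satisfies N(ax) = |a|_p N(x) for all a ∈ ℚ_p, and satisfies the strong triangle inequality. -/
/-! Every nonzero `x` has a unique `k` with `p ^ k • x ∈ L \ pL`, hence a unique layer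
`L (j + 1) \ L j` containing `p ^ k • x`, and then `N x = p ^ k * q j`. Since all `q j` lie in
`(1/p, 1]`, the values `p ^ k * q j` are ordered lexicographically in `(k, j)`, so that
`p ^ m • z ∈ L (i + 1) ↔ N z ≤ p ^ m * q i`: the closed balls of `N` are lattices. Balls being
additive subgroups gives the strong triangle inequality; their stability under `ℤ_[p]ˣ`, together
with `N (p ^ k • x) = p ^ (-k) * N x`, gives homogeneity. -/

theorem Fin.exists_mem_succ_notMem_castSucc {α S : Type*} [SetLike S α] {n : ℕ}
    (s : Fin (n + 1) → S) {z : α} (hlast : z ∈ s (Fin.last n)) (hzero : z ∉ s 0) :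
    ∃ j : Fin n, z ∈ s j.succ ∧ z ∉ s j.castSucc := by
  by_contra! h
  have hnot : ∀ i, z ∉ s i := fun i => by
    induction i using Fin.induction with
    | zero => exact hzero
    | succ j ih => exact fun hj => ih (h j hj)
  exact hnot _ hlast

theorem mem_succ_iff_le_of_mem_succ_notMem_castSucc {α S : Type*} [SetLike S α] [Preorder S]
    [IsConcreteLE S α] {n : ℕ} {s : Fin (n + 1) → S} (hs : Monotone s) {z : α} {j : Fin n}
    (h₁ : z ∈ s j.succ) (h₂ : z ∉ s j.castSucc) (i : Fin n) : z ∈ s i.succ ↔ j ≤ i :=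
  ⟨fun h => not_lt.1 fun hij => h₂ (SetLike.le_def.1 (hs (Fin.succ_le_castSucc_iff.2 hij)) h),
    fun hji => SetLike.le_def.1 (hs (Fin.succ_le_succ_iff.2 hji)) h₁⟩

theorem zpow_mul_lt_zpow_mul_of_lt {K : Type*} [Field K] [LinearOrder K] [IsStrictOrderedRing K]
    {b s t : K} (hb : 1 < b) (hs : s ≤ 1) (ht : b⁻¹ < t)
    {k m : ℤ} (hkm : k < m) : b ^ k * s < b ^ m * t := by
  have hb0 : 0 < b := zero_lt_one.trans hb
  calc b ^ k * s ≤ b ^ k := mul_le_of_le_one_right (zpow_pos hb0 k).le hs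
    _ ≤ b ^ (m - 1) := zpow_le_zpow_right₀ hb.le (by omega)
    _ = b ^ m * b⁻¹ := zpow_sub_one₀ hb0.ne' m
    _ < b ^ m * t := mul_lt_mul_of_pos_left ht (zpow_pos hb0 m)

variable {p : ℕ} [Fact p.Prime]

section Lattice

variable {V : Type*} [AddCommGroup V] [Module ℚ_[p] V] [Module ℤ_[p] V]
  [IsScalarTower ℤ_[p] ℚ_[p] V]

theorem smul_mem_of_norm_le_one (Λ : Submodule ℤ_[p] V) {a : ℚ_[p]} (ha : ‖a‖ ≤ 1) {x : V}
    (hx : x ∈ Λ) : a • x ∈ Λ := by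
  let c : ℤ_[p] := ⟨a, ha⟩
  have h : (c : ℚ_[p]) • x = c • x := algebraMap_smul _ c x
  exact h ▸ Λ.smul_mem c hx

theorem smul_mem_iff_of_norm_eq_one (Λ : Submodule ℤ_[p] V) {u : ℚ_[p]} (hu : ‖u‖ = 1)
    {x : V} : u • x ∈ Λ ↔ x ∈ Λ := by
  have hu0 : u ≠ 0 := norm_ne_zero_iff.1 (hu ▸ one_ne_zero)
  refine ⟨fun h => ?_, smul_mem_of_norm_le_one Λ hu.le⟩
  have h' := smul_mem_of_norm_le_one Λ (a := u⁻¹) (by rw [norm_inv, hu, inv_one]) h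
  rwa [inv_smul_smul₀ hu0] at h'

theorem zpow_smul_mem_of_le (Λ : Submodule ℤ_[p] V) {x : V} {k m : ℤ}
    (hx : (p : ℚ_[p]) ^ k • x ∈ Λ) (hkm : k ≤ m) : (p : ℚ_[p]) ^ m • x ∈ Λ := by
  have hp : (p : ℚ_[p]) ≠ 0 := Nat.cast_ne_zero.2 (Fact.out : p.Prime).ne_zero
  have hnorm : ‖(p : ℚ_[p]) ^ (m - k)‖ ≤ 1 := by
    rw [Padic.norm_p_zpow]
    exact zpow_le_one_of_nonpos₀ (by exact_mod_cast (Fact.out : p.Prime).one_le) (by omega)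
  simpa only [smul_smul, ← zpow_add₀ hp, sub_add_cancel] using
    smul_mem_of_norm_le_one Λ hnorm hx

theorem mem_span_range_basis_iff_norm_le_one {ι : Type*} [Fintype ι]
    (e : Module.Basis ι ℚ_[p] V) {x : V} :
    x ∈ Submodule.span ℤ_[p] (Set.range e) ↔ ‖e.equivFun x‖ ≤ 1 := by
  rw [e.mem_span_iff_repr_mem ℤ_[p], pi_norm_le_iff_of_nonneg zero_le_one]
  refine forall_congr' fun i => ⟨?_, fun h => ⟨⟨_, h⟩, rfl⟩⟩
  rintro ⟨c, hc⟩
  simpa [← hc] using c.norm_le_one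

end Lattice

theorem zpow_smul_mem_pScale_iff {d : ℕ} (Λ : Submodule ℤ_[p] (Fin d → ℚ_[p])) (k : ℤ)
    (x : Fin d → ℚ_[p]) :
    (p : ℚ_[p]) ^ k • x ∈ pScale p Λ ↔ (p : ℚ_[p]) ^ (k - 1) • x ∈ Λ := by
  have hp : (p : ℚ_[p]) ≠ 0 := Nat.cast_ne_zero.2 (Fact.out : p.Prime).ne_zero
  have hy : ∀ y, (p : ℤ_[p]) • y = (p : ℚ_[p]) ^ k • x ↔ y = (p : ℚ_[p]) ^ (k - 1) • x := by
    intro y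
    rw [← algebraMap_smul ℚ_[p], map_natCast, zpow_sub_one₀ hp, mul_comm, mul_smul,
      eq_inv_smul_iff₀ hp]
  simp only [pScale, Submodule.mem_map, LinearMap.smul_apply, LinearMap.id_apply, hy,
    exists_eq_right]

/-- `k` is read off from the sup norm of the coordinates of `x` in a basis of `Λ`, which lies in
`(p ^ (k - 1), p ^ k]`. -/
theorem IsLattice.exists_zpow_smul_mem_notMem_pScale {d : ℕ}
    {Λ : Submodule ℤ_[p] (Fin d → ℚ_[p])} (hΛ : IsLattice p Λ) {x : Fin d → ℚ_[p]}
    (hx : x ≠ 0) :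
    ∃ k : ℤ, (p : ℚ_[p]) ^ k • x ∈ Λ ∧ (p : ℚ_[p]) ^ k • x ∉ pScale p Λ := by
  obtain ⟨e, rfl⟩ := hΛ
  have hp : (1 : ℝ) < p := by exact_mod_cast (Fact.out : p.Prime).one_lt
  obtain ⟨n, hlo, hhi⟩ :=
    exists_mem_Ioc_zpow (norm_pos_iff.2 ((map_ne_zero_iff _ e.equivFun.injective).2 hx)) hp
  refine ⟨n + 1, ?_, ?_⟩ <;>
    simp only [zpow_smul_mem_pScale_iff, mem_span_range_basis_iff_norm_le_one, map_smul,
      norm_smul, Padic.norm_p_zpow, add_sub_cancel_right, zpow_neg,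
      inv_mul_le_iff₀ (zpow_pos (zero_lt_one.trans hp) _), mul_one, not_le]
  · exact hhi
  · exact hlo

/-- The function `N` of Lemma 2 attached to the chain `pL = L 0 ≤ ⋯ ≤ L n = L` and the
parameters `q`. -/
structure IsLatticeChainNorm {d n : ℕ} (L : Fin (n + 1) → Submodule ℤ_[p] (Fin d → ℚ_[p]))
    (q : Fin n → ℝ) (N : (Fin d → ℚ_[p]) → ℝ) : Prop where
  isLattice_last : IsLattice p (L (Fin.last n))
  monotone : Monotone L
  zero_eq_pScale : L 0 = pScale p (L (Fin.last n))
  inv_lt : ∀ i, (p : ℝ)⁻¹ < q i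
  le_one : ∀ i, q i ≤ 1
  strictMono : StrictMono q
  map_zero : N 0 = 0
  eq_of_mem_succ_notMem_castSucc : ∀ j : Fin n, ∀ x, x ∈ L j.succ → x ∉ L j.castSucc → N x = q j
  map_zpow_smul : ∀ (k : ℤ) x, N ((p : ℚ_[p]) ^ k • x) = (p : ℝ) ^ (-k) * N x

namespace IsLatticeChainNorm

variable {d n : ℕ} {L : Fin (n + 1) → Submodule ℤ_[p] (Fin d → ℚ_[p])} {q : Fin n → ℝ}
  {N : (Fin d → ℚ_[p]) → ℝ}

theorem eq_zpow_mul (hN : IsLatticeChainNorm L q N) {x : Fin d → ℚ_[p]} {k : ℤ} {j : Fin n}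
    (h₁ : (p : ℚ_[p]) ^ k • x ∈ L j.succ) (h₂ : (p : ℚ_[p]) ^ k • x ∉ L j.castSucc) :
    N x = (p : ℝ) ^ k * q j := by
  have hp : (p : ℝ) ≠ 0 := Nat.cast_ne_zero.2 (Fact.out : p.Prime).ne_zero
  have h := hN.map_zpow_smul k x
  rw [hN.eq_of_mem_succ_notMem_castSucc j _ h₁ h₂] at h
  rw [h, ← mul_assoc, ← zpow_add₀ hp, add_neg_cancel, zpow_zero, one_mul]

theorem exists_zpow_smul_mem_layer (hN : IsLatticeChainNorm L q N) {x : Fin d → ℚ_[p]}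
    (hx : x ≠ 0) : ∃ (k : ℤ) (j : Fin n),
      (p : ℚ_[p]) ^ k • x ∈ L j.succ ∧ (p : ℚ_[p]) ^ k • x ∉ L j.castSucc := by
  obtain ⟨k, hk, hk0⟩ := hN.isLattice_last.exists_zpow_smul_mem_notMem_pScale hx
  exact ⟨k, Fin.exists_mem_succ_notMem_castSucc L hk (hN.zero_eq_pScale ▸ hk0)⟩

theorem zpow_smul_mem_zero_of_lt (hN : IsLatticeChainNorm L q N) {z : Fin d → ℚ_[p]} {k m : ℤ}
    (hz : (p : ℚ_[p]) ^ k • z ∈ L (Fin.last n)) (hkm : k < m) : (p : ℚ_[p]) ^ m • z ∈ L 0 := by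
  rw [hN.zero_eq_pScale, zpow_smul_mem_pScale_iff]
  exact zpow_smul_mem_of_le _ hz (by omega)

theorem zpow_smul_mem_succ_iff (hN : IsLatticeChainNorm L q N) (m : ℤ) (i : Fin n)
    (z : Fin d → ℚ_[p]) : (p : ℚ_[p]) ^ m • z ∈ L i.succ ↔ N z ≤ (p : ℝ) ^ m * q i := by
  have hp : (1 : ℝ) < p := by exact_mod_cast (Fact.out : p.Prime).one_lt
  rcases eq_or_ne z 0 with rfl | hz
  · refine iff_of_true (by rw [smul_zero]; exact zero_mem _) ?_
    rw [hN.map_zero]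
    exact (mul_pos (zpow_pos (zero_lt_one.trans hp) m)
      ((inv_pos.2 (zero_lt_one.trans hp)).trans (hN.inv_lt i))).le
  obtain ⟨k, j, h₁, h₂⟩ := hN.exists_zpow_smul_mem_layer hz
  have hlast : (p : ℚ_[p]) ^ k • z ∈ L (Fin.last n) := hN.monotone (Fin.le_last _) h₁
  rw [hN.eq_zpow_mul h₁ h₂]
  rcases lt_trichotomy k m with hkm | rfl | hmk
  · exact iff_of_true (hN.monotone (Fin.zero_le _) (hN.zpow_smul_mem_zero_of_lt hlast hkm))
      (zpow_mul_lt_zpow_mul_of_lt hp (hN.le_one j) (hN.inv_lt i) hkm).le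
  · rw [mem_succ_iff_le_of_mem_succ_notMem_castSucc hN.monotone h₁ h₂,
      mul_le_mul_iff_right₀ (zpow_pos (zero_lt_one.trans hp) k), hN.strictMono.le_iff_le]
  · refine iff_of_false (fun h => h₂ ?_)
      (not_le.2 (zpow_mul_lt_zpow_mul_of_lt hp (hN.le_one i) (hN.inv_lt j) hmk))
    exact hN.monotone (Fin.zero_le _)
      (hN.zpow_smul_mem_zero_of_lt (hN.monotone (Fin.le_last _) h) hmk)

theorem pos_of_ne_zero (hN : IsLatticeChainNorm L q N) {x : Fin d → ℚ_[p]} (hx : x ≠ 0) :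
    0 < N x := by
  have hp : (0 : ℝ) < p := by exact_mod_cast (Fact.out : p.Prime).pos
  obtain ⟨k, j, h₁, h₂⟩ := hN.exists_zpow_smul_mem_layer hx
  rw [hN.eq_zpow_mul h₁ h₂]
  exact mul_pos (zpow_pos hp k) ((inv_pos.2 hp).trans (hN.inv_lt j))

theorem map_smul_of_norm_eq_one (hN : IsLatticeChainNorm L q N) {u : ℚ_[p]} (hu : ‖u‖ = 1)
    (x : Fin d → ℚ_[p]) : N (u • x) = N x := by
  rcases eq_or_ne x 0 with rfl | hx
  · rw [smul_zero]
  obtain ⟨k, j, h₁, h₂⟩ := hN.exists_zpow_smul_mem_layer hx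
  have h₁' : (p : ℚ_[p]) ^ k • u • x ∈ L j.succ := by
    rwa [smul_comm, smul_mem_iff_of_norm_eq_one _ hu]
  have h₂' : (p : ℚ_[p]) ^ k • u • x ∉ L j.castSucc := by
    rwa [smul_comm, smul_mem_iff_of_norm_eq_one _ hu]
  rw [hN.eq_zpow_mul h₁' h₂', hN.eq_zpow_mul h₁ h₂]

theorem add_le_of_le (hN : IsLatticeChainNorm L q N) {x y : Fin d → ℚ_[p]} (hyx : N y ≤ N x) :
    N (x + y) ≤ N x := by
  rcases eq_or_ne x 0 with rfl | hx
  · rwa [zero_add]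
  obtain ⟨k, j, h₁, h₂⟩ := hN.exists_zpow_smul_mem_layer hx
  rw [hN.eq_zpow_mul h₁ h₂, ← hN.zpow_smul_mem_succ_iff] at hyx ⊢
  rw [smul_add]
  exact add_mem h₁ hyx

theorem add_le_max (hN : IsLatticeChainNorm L q N) (x y : Fin d → ℚ_[p]) :
    N (x + y) ≤ max (N x) (N y) := by
  rcases le_total (N y) (N x) with h | h
  · exact (hN.add_le_of_le h).trans (le_max_left _ _)
  · exact (add_comm y x ▸ hN.add_le_of_le h).trans (le_max_right _ _)

theorem map_smul (hN : IsLatticeChainNorm L q N) (a : ℚ_[p]) (x : Fin d → ℚ_[p]) :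
    N (a • x) = ‖a‖ * N x := by
  rcases eq_or_ne a 0 with rfl | ha
  · rw [zero_smul, hN.map_zero, norm_zero, zero_mul]
  have hp : (p : ℚ_[p]) ≠ 0 := Nat.cast_ne_zero.2 (Fact.out : p.Prime).ne_zero
  have hp' : (p : ℝ) ≠ 0 := Nat.cast_ne_zero.2 (Fact.out : p.Prime).ne_zero
  have hu : ‖a * (p : ℚ_[p]) ^ (-a.valuation)‖ = 1 := by
    rw [norm_mul, Padic.norm_p_zpow, Padic.norm_eq_zpow_neg_valuation ha, neg_neg,
      ← zpow_add₀ hp', neg_add_cancel, zpow_zero]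
  have hax : a • x = (p : ℚ_[p]) ^ a.valuation • (a * (p : ℚ_[p]) ^ (-a.valuation)) • x := by
    rw [smul_smul, mul_left_comm, ← zpow_add₀ hp, add_neg_cancel, zpow_zero, mul_one]
  rw [hax, hN.map_zpow_smul, hN.map_smul_of_norm_eq_one hu, Padic.norm_eq_zpow_neg_valuation ha]

theorem eq_zero_iff (hN : IsLatticeChainNorm L q N) (x : Fin d → ℚ_[p]) : N x = 0 ↔ x = 0 :=
  ⟨fun h => by_contra fun hx => (hN.pos_of_ne_zero hx).ne' h, fun h => h ▸ hN.map_zero⟩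

end IsLatticeChainNorm

theorem lemma2_norm_is_norm_general (p : ℕ) [Fact p.Prime] (d : ℕ)
    (L : Fin (d + 1) → Submodule ℤ_[p] (Fin d → ℚ_[p]))
    (hlat : ∀ j, IsLattice p (L j))
    (hmono : StrictMono L)
    (h0 : L 0 = pScale p (L (Fin.last d)))
    (q : Fin d → ℝ) (hq₁ : ∀ i, (p : ℝ)⁻¹ < q i) (hq₂ : ∀ i, q i ≤ 1)
    (hqmono : StrictMono q)
    (N : (Fin d → ℚ_[p]) → ℝ)
    (hN0 : N 0 = 0)
    (hNq : ∀ j : Fin d, ∀ x, x ∈ L j.succ → x ∉ L j.castSucc → N x = q j)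
    (hNext : ∀ (k : ℤ) (x : Fin d → ℚ_[p]),
      N (((p : ℚ_[p]) ^ k) • x) = (p : ℝ) ^ (-k) * N x) :
    (∀ x, N x = 0 ↔ x = 0) ∧
    (∀ (a : ℚ_[p]) (x : Fin d → ℚ_[p]), N (a • x) = ‖a‖ * N x) ∧
    (∀ x y, N (x + y) ≤ max (N x) (N y)) := by
  have hN : IsLatticeChainNorm L q N :=
    ⟨hlat _, hmono.monotone, h0, hq₁, hq₂, hqmono, hN0, hNq, hNext⟩
  exact ⟨hN.eq_zero_iff, hN.map_smul, hN.add_le_max⟩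

theorem lemma2_norm_is_norm (p : ℕ) [Fact p.Prime] (d : ℕ)
    (L : Fin (d + 1) → Submodule ℤ_[p] (Fin d → ℚ_[p]))
    (hlat : ∀ j, IsLattice p (L j))
    (hmono : StrictMono L)
    (h0 : L 0 = pScale p (L (Fin.last d)))
    (hmax : ∀ j : Fin d, ∀ M : Submodule ℤ_[p] (Fin d → ℚ_[p]),
      IsLattice p M → L j.castSucc < M → M < L j.succ → False)
    (q : Fin d → ℝ) (hq₁ : ∀ i, (p : ℝ)⁻¹ < q i) (hq₂ : ∀ i, q i ≤ 1)
    (hqmono : StrictMono q)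
    (N : (Fin d → ℚ_[p]) → ℝ)
    (hN0 : N 0 = 0)
    (hNq : ∀ j : Fin d, ∀ x, x ∈ L j.succ → x ∉ L j.castSucc → N x = q j)
    (hNext : ∀ (k : ℤ) (x : Fin d → ℚ_[p]),
      N (((p : ℚ_[p]) ^ k) • x) = (p : ℝ) ^ (-k) * N x) :
    (∀ x, N x = 0 ↔ x = 0) ∧
    (∀ (a : ℚ_[p]) (x : Fin d → ℚ_[p]), N (a • x) = ‖a‖ * N x) ∧
    (∀ x y, N (x + y) ≤ max (N x) (N y)) :=
  lemma2_norm_is_norm_general p d L hlat hmono h0 q hq₁ hq₂ hqmono N hN0 hNq hNext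
end

section
/- Every closed ball B containing 0 with respect to the norm N^A_{q₁,...,q_d}(z) = max_i qᵢ|(Az)ᵢ|_p (with A ∈ GL_d(ℚ_p) and p⁻¹ < qᵢ ≤ 1) is a lattice in ℚ_p^d, i.e. an open compact ℤ_p-submodule of rank d. -/
/-- The rotated norm `N^A_{q₁,…,q_d}(z) = max_i qᵢ |(Az)ᵢ|_p`. -/
noncomputable def padicNA (p : ℕ) [Fact p.Prime] {d : ℕ} (q : Fin d → ℝ)
    (A : Matrix (Fin d) (Fin d) ℚ_[p]) (z : Fin d → ℚ_[p]) : ℝ :=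
  ⨆ i, q i * ‖A.mulVec z i‖

open Matrix Metric Set Submodule

variable {p : ℕ} [Fact p.Prime]

namespace Padic

theorem norm_le_iff_norm_le_zpow_log {x : ℚ_[p]} {s : ℝ} (hs : 0 < s) :
    ‖x‖ ≤ s ↔ ‖x‖ ≤ (p : ℝ) ^ Int.log p s := by
  have hp : 1 < p := (Fact.out : p.Prime).one_lt
  rcases eq_or_ne x 0 with rfl | hx
  · simp only [norm_zero, hs.le, true_iff]
    positivity
  · rw [norm_eq_zpow_neg_valuation hx, Int.zpow_le_iff_le_log hp hs,
      zpow_le_zpow_iff_right₀ (by exact_mod_cast hp)]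

theorem norm_le_iff_norm_zpow_log_mul_le_one {x : ℚ_[p]} {s : ℝ} (hs : 0 < s) :
    ‖x‖ ≤ s ↔ ‖(p : ℚ_[p]) ^ Int.log p s * x‖ ≤ 1 := by
  have hp : (0 : ℝ) < (p : ℝ) ^ Int.log p s :=
    zpow_pos (Nat.cast_pos.2 (Fact.out : p.Prime).pos) _
  rw [norm_le_iff_norm_le_zpow_log hs, norm_mul, norm_zpow, norm_p, _root_.inv_zpow,
    inv_mul_le_iff₀ hp, mul_one]

end Padic

namespace Module.Basis

variable {ι V : Type*} [AddCommGroup V] [Module ℚ_[p] V] [Module ℤ_[p] V]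
  [IsScalarTower ℤ_[p] ℚ_[p] V]

theorem mem_span_padicInt_iff (e : Basis ι ℚ_[p] V) (v : V) :
    v ∈ span ℤ_[p] (range e) ↔ ∀ i, ‖e.repr v i‖ ≤ 1 := by
  rw [e.mem_span_iff_repr_mem ℤ_[p]]
  exact forall_congr' fun i => ⟨fun ⟨x, hx⟩ => hx ▸ x.2, fun h => ⟨⟨_, h⟩, rfl⟩⟩

variable [Finite ι]

theorem coe_span_padicInt_eq_preimage (e : Basis ι ℚ_[p] V) :
    (span ℤ_[p] (range e) : Set V) = e.equivFun ⁻¹' univ.pi fun _ => closedBall 0 1 := by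
  ext v
  simp [e.mem_span_padicInt_iff]

variable [TopologicalSpace V] [IsTopologicalAddGroup V] [ContinuousSMul ℚ_[p] V]

theorem isCompact_span_padicInt (e : Basis ι ℚ_[p] V) :
    IsCompact (span ℤ_[p] (range e) : Set V) := by
  have := e.finiteDimensional_of_finite
  rw [e.coe_span_padicInt_eq_preimage, ← e.equivFun.image_symm_eq_preimage]
  exact (isCompact_univ_pi fun _ => isCompact_closedBall 0 1).image
    (LinearMap.continuous_of_finiteDimensional e.equivFun.symm.toLinearMap)

theorem isOpen_span_padicInt [T2Space V] (e : Basis ι ℚ_[p] V) :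
    IsOpen (span ℤ_[p] (range e) : Set V) := by
  have := e.finiteDimensional_of_finite
  rw [e.coe_span_padicInt_eq_preimage]
  exact (isOpen_set_pi finite_univ fun _ _ =>
    IsUltrametricDist.isOpen_closedBall 0 one_ne_zero).preimage
      (LinearMap.continuous_of_finiteDimensional e.equivFun.toLinearMap)

end Module.Basis

-- `0 ≤ r` covers `d = 0`, where the supremum over the empty index type is the junk value `0`.
theorem padicNA_le_iff {d : ℕ} {q : Fin d → ℝ} {A : Matrix (Fin d) (Fin d) ℚ_[p]}
    {z : Fin d → ℚ_[p]} {r : ℝ} (hr : 0 ≤ r) :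
    padicNA p q A z ≤ r ↔ ∀ i, q i * ‖(A *ᵥ z) i‖ ≤ r :=
  ⟨fun h i => (le_ciSup (finite_range _).bddAbove i).trans h, (Real.iSup_le · hr)⟩

theorem padicNA_le_iff_norm_zpow_log_mul_le_one {d : ℕ} {q : Fin d → ℝ} (hq : ∀ i, 0 < q i)
    {A : Matrix (Fin d) (Fin d) ℚ_[p]} {z : Fin d → ℚ_[p]} {r : ℝ} (hr : 0 < r) :
    padicNA p q A z ≤ r ↔
      ∀ i, ‖(p : ℚ_[p]) ^ Int.log p (r / q i) * (A *ᵥ z) i‖ ≤ 1 := by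
  rw [padicNA_le_iff hr.le]
  refine forall_congr' fun i => ?_
  rw [mul_comm, ← le_div_iff₀ (hq i),
    Padic.norm_le_iff_norm_zpow_log_mul_le_one (div_pos hr (hq i))]

theorem ball_of_rotated_norm_is_lattice (p : ℕ) [Fact p.Prime] (d : ℕ)
    (q : Fin d → ℝ) (hq : ∀ i, (p : ℝ)⁻¹ < q i ∧ q i ≤ 1)
    (A : Matrix (Fin d) (Fin d) ℚ_[p]) (hA : IsUnit A)
    (r : ℝ) (hr : 0 < r) :
    ∃ L : Submodule ℤ_[p] (Fin d → ℚ_[p]),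
      IsLattice p L ∧
      (L : Set (Fin d → ℚ_[p])) = {z | padicNA p q A z ≤ r} ∧
      IsOpen (L : Set (Fin d → ℚ_[p])) ∧
      IsCompact (L : Set (Fin d → ℚ_[p])) := by
  have hq0 : ∀ i, 0 < q i := fun i =>
    (inv_pos.2 (Nat.cast_pos.2 (Fact.out : p.Prime).pos)).trans (hq i).1
  have hp : (p : ℚ_[p]) ≠ 0 := Nat.cast_ne_zero.2 (Fact.out : p.Prime).ne_zero
  set B := (diagonal fun i => (p : ℚ_[p]) ^ Int.log p (r / q i)) * A
  have hB : IsUnit B :=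
    (isUnit_diagonal.2 (Pi.isUnit_iff.2 fun _ => (zpow_ne_zero _ hp).isUnit)).mul hA
  let e := Module.Basis.ofEquivFun (toLinearEquiv' B hB.invertible)
  refine ⟨span ℤ_[p] (range e), ⟨e, rfl⟩, ?_, e.isOpen_span_padicInt, e.isCompact_span_padicInt⟩
  ext z
  rw [SetLike.mem_coe, e.mem_span_padicInt_iff, mem_ofPred_eq,
    padicNA_le_iff_norm_zpow_log_mul_le_one hq0 hr, show e.repr z = B *ᵥ z from rfl,
    ← mulVec_mulVec]
  simp only [mulVec_diagonal]
end
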